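/- Let d∈ℕ and let 𝕋:ℝ^d→ℝ^{d×d} be continuous with 𝕋(x) symmetric and c|ξ|²≤⟨ξ,𝕋(x)ξ⟩≤C|ξ|² for all x,ξ and constants 0<c≤C. Then for every probability measure ρ on ℝ^d and every Borel vector field u with ∫|u|²dρ<∞, the weighted action admits the dual representation (1/2)∫⟨𝕋(x)^{-1}u(x),u(x)⟩dρ(x) = sup_{Φ∈C_c(ℝ^d;ℝ^d)} [ ∫Φ(x)·u(x)dρ(x) − (1/2)∫⟨𝕋(x)Φ(x),Φ(x)⟩dρ(x) ], where the supremum runs over continuous compactly supported vector fields Φ. -/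

import Mathlib

open MeasureTheory Real Set Filter Topology Metric
open scoped ENNReal RealInnerProductSpace BigOperators BoundedContinuousFunction

noncomputable section

/-- Euclidean space `ℝ^d`. -/
abbrev Euc (d : ℕ) := EuclideanSpace ℝ (Fin d)

/-- A modulus of continuity: continuous with value `0` at `0`. -/
def IsModulus (ω : ℝ → ℝ) : Prop := Continuous ω ∧ ω 0 = 0

/-- Assumptions (μ1)–(μ2) on the Lebesgue density `μt` of the base measure. -/
def MuAssump {d : ℕ} (μt : Euc d → ℝ) (ωμ : ℝ → ℝ) (cμ Cμ : ℝ) : Prop :=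
  IsModulus ωμ ∧ 0 < cμ ∧ cμ ≤ Cμ ∧
    (∀ x y, |μt x - μt y| ≤ ωμ ‖x - y‖) ∧
    (∀ x, cμ ≤ μt x ∧ μt x ≤ Cμ)

/-- The base measure `μ = μt · Lebesgue`. -/
def baseMeasure {d : ℕ} (μt : Euc d → ℝ) : Measure (Euc d) :=
  volume.withDensity fun x => ENNReal.ofReal (μt x)

/-- Assumptions (θ1)–(θ4) on the edge connectivity `ϑ`. -/
def ThetaAssump {d : ℕ} (ϑ : Euc d → Euc d → ℝ) (ωϑ : ℝ → ℝ) (Csupp Cmom : ℝ) : Prop :=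
  (∀ z w, 0 ≤ ϑ z w) ∧
  (∀ z w, ϑ z (-w) = ϑ z w) ∧
  (∀ z, ContinuousOn (fun w => ϑ z w) {w | 0 < ϑ z w}) ∧
  IsModulus ωϑ ∧
  (∀ z z' w, |ϑ z w - ϑ z' w| ≤ ωϑ ‖z - z'‖) ∧
  0 < Csupp ∧ (∀ z w, ϑ z w ≠ 0 → ‖w‖ ≤ Csupp) ∧
  0 < Cmom ∧ (∀ z w, ‖w‖ ^ 2 * ϑ z w ≤ Cmom)

/-- Assumption (θ5): nondegeneracy of the second moment of `ϑ`. -/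
def ThetaNondeg {d : ℕ} (ϑ : Euc d → Euc d → ℝ) (cnd : ℝ) : Prop :=
  0 < cnd ∧ ∀ z ξ : Euc d, cnd * ‖ξ‖ ^ 2 ≤ ∫ w, ⟪w, ξ⟫ ^ 2 * ϑ z w

/-- Rescaled edge weights `η^ε(x,y) = ε^{-(d+2)} ϑ((x+y)/2, (x-y)/ε)`. -/
def etaEps {d : ℕ} (ϑ : Euc d → Euc d → ℝ) (ε : ℝ) (x y : Euc d) : ℝ :=
  (1 / ε ^ (d + 2)) * ϑ ((2 : ℝ)⁻¹ • (x + y)) (ε⁻¹ • (x - y))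

/-- The ε-tensor `𝕋^ε(x) = (1/2)∫ (x-y)⊗(x-y) η^ε(x,y) dμ(y)`. -/
def tensorEps {d : ℕ} (μt : Euc d → ℝ) (ϑ : Euc d → Euc d → ℝ) (ε : ℝ) (x : Euc d) :
    Matrix (Fin d) (Fin d) ℝ :=
  Matrix.of fun l m => (1 / 2) * ∫ y, (x - y) l * (x - y) m * etaEps ϑ ε x y ∂(baseMeasure μt)

/-- The limiting tensor `𝕋(x) = (1/2)∫ w⊗w μt(x) ϑ(x,w) dw`. -/
def tensorLim {d : ℕ} (μt : Euc d → ℝ) (ϑ : Euc d → Euc d → ℝ) (x : Euc d) :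
    Matrix (Fin d) (Fin d) ℝ :=
  Matrix.of fun l m => (1 / 2) * ∫ w, w l * w m * (μt x * ϑ x w)

/-- A matrix acting on a Euclidean vector. -/
def matApply {d : ℕ} (A : Matrix (Fin d) (Fin d) ℝ) (v : Euc d) : Euc d :=
  (WithLp.equiv 2 (Fin d → ℝ)).symm (A.mulVec (WithLp.equiv 2 (Fin d → ℝ) v))

/-- Finite second moment. -/
def HasM2 {d : ℕ} (ρ : Measure (Euc d)) : Prop := Integrable (fun x => ‖x‖ ^ 2) ρ

/-- Second moment. -/
def M2 {d : ℕ} (ρ : Measure (Euc d)) : ℝ := ∫ x, ‖x‖ ^ 2 ∂ρ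

/-- `𝒫₂(ℝ^d)`: probability measures with finite second moment. -/
def IsP2 {d : ℕ} (ρ : Measure (Euc d)) : Prop := IsProbabilityMeasure ρ ∧ HasM2 ρ

/-- (K1): the kernel is `C¹` jointly in both variables. -/
def KAssumpC1 {d : ℕ} (K : Euc d → Euc d → ℝ) : Prop :=
  ContDiff ℝ 1 (fun p : Euc d × Euc d => K p.1 p.2)

/-- (K3): Lipschitz-type bound `|K(x,y)-K(x',y')| ≤ L (|·| ∨ |·|²)`. -/
def KAssumpLip {d : ℕ} (K : Euc d → Euc d → ℝ) (L : ℝ) : Prop :=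
  ∀ x y x' y' : Euc d,
    |K x y - K x' y'| ≤
      L * max (Real.sqrt (‖x - x'‖ ^ 2 + ‖y - y'‖ ^ 2)) (‖x - x'‖ ^ 2 + ‖y - y'‖ ^ 2)

/-- The Euclidean norm of the full gradient `∇K(x,y)`. -/
def fullGradNorm {d : ℕ} (K : Euc d → Euc d → ℝ) (x y : Euc d) : ℝ :=
  Real.sqrt (‖gradient (fun x' => K x' y) x‖ ^ 2 + ‖gradient (fun y' => K x y') y‖ ^ 2)

/-- (K4): linear growth of the gradient. -/
def KAssumpGrowth {d : ℕ} (K : Euc d → Euc d → ℝ) (C : ℝ) : Prop :=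
  ∀ x y, fullGradNorm K x y ≤ C * (1 + ‖x‖ + ‖y‖)

/-- Full set of kernel assumptions (K1)–(K4) for an `N`-species family, together with the
symmetry `K^{(ik)} = K^{(ki)}`. -/
def KernAssump {d N : ℕ} (K : Fin N → Fin N → Euc d → Euc d → ℝ) (LK CK : ℝ) : Prop :=
  0 < LK ∧ 0 < CK ∧
    (∀ i k, KAssumpC1 (K i k)) ∧
    (∀ i k, ∀ x y, K i k x y = K i k y x) ∧
    (∀ i k, KAssumpLip (K i k) LK) ∧
    (∀ i k, KAssumpGrowth (K i k) CK) ∧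
    (∀ i k, K i k = K k i)

/-- `(K ∗ σ)(x) = ∫ K(x,y) dσ(y)`. -/
def Kconv {d : ℕ} (K : Euc d → Euc d → ℝ) (σ : Measure (Euc d)) (x : Euc d) : ℝ :=
  ∫ y, K x y ∂σ

/-- `(∇K ∗ σ)(x) = ∫ ∇_x K(x,y) dσ(y)`. -/
def gradKconv {d : ℕ} (K : Euc d → Euc d → ℝ) (σ : Measure (Euc d)) (x : Euc d) : Euc d :=
  ∫ y, gradient (fun x' => K x' y) x ∂σ

/-- The interaction energy `E(ρ) = (1/2)Σ_{ik} ∬ K^{(ik)} dρ^{(i)} dρ^{(k)}`. -/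
def energy {d N : ℕ} (K : Fin N → Fin N → Euc d → Euc d → ℝ) (ρ : Fin N → Measure (Euc d)) : ℝ :=
  (1 / 2) * ∑ i, ∑ k, ∫ p : Euc d × Euc d, K i k p.1 p.2 ∂((ρ i).prod (ρ k))

/-- The drift velocity `Σ_k ∇K^{(ik)} ∗ ρ^{(k)}`. -/
def driftVel {d N : ℕ} (K : Fin N → Fin N → Euc d → Euc d → ℝ) (ρ : Fin N → Measure (Euc d))
    (i : Fin N) (x : Euc d) : Euc d :=
  ∑ k, gradKconv (K i k) (ρ k) x

/-- The local (tensorized) metric slope `D_𝕋(ρ)`. -/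
def locSlope {d N : ℕ} (μt : Euc d → ℝ) (ϑ : Euc d → Euc d → ℝ)
    (K : Fin N → Fin N → Euc d → Euc d → ℝ) (ρ : Fin N → Measure (Euc d)) : ℝ :=
  ∑ i, ∫ x, ⟪driftVel K ρ i x, matApply (tensorLim μt ϑ x) (driftVel K ρ i x)⟫ ∂(ρ i)

/-- Test functions in `C_c^∞((0,T)×ℝ^d)`. -/
def TestFun {d : ℕ} (T : ℝ) (φ : ℝ × Euc d → ℝ) : Prop :=
  ContDiff ℝ (⊤ : ℕ∞) φ ∧ HasCompactSupport φ ∧ ∀ p : ℝ × Euc d, φ p ≠ 0 → p.1 ∈ Ioo 0 T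

/-- Weak solutions of the local continuity equation `CE_T`: the flux `ĵ^{(i)}_t` is encoded
by the vector density `jd t i` with respect to the measure `jm t i`. -/
def IsCE {d N : ℕ} (T : ℝ) (ρ : ℝ → Fin N → Measure (Euc d))
    (jm : ℝ → Fin N → Measure (Euc d)) (jd : ℝ → Fin N → Euc d → Euc d) : Prop :=
  (∀ t, ∀ i, IsProbabilityMeasure (ρ t i)) ∧
  (∀ i, ∀ f : Euc d →ᵇ ℝ, ContinuousOn (fun t => ∫ x, f x ∂(ρ t i)) (Icc 0 T)) ∧
  (∀ i, IntegrableOn (fun t => ∫ x, ‖jd t i x‖ ∂(jm t i)) (Icc 0 T)) ∧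
  (∀ i, ∀ φ : ℝ × Euc d → ℝ, TestFun T φ →
    (∫ t in Icc 0 T, ∫ x, deriv (fun s => φ (s, x)) t ∂(ρ t i)) +
      (∫ t in Icc 0 T, ∫ x, ⟪gradient (fun y => φ (t, y)) x, jd t i x⟫ ∂(jm t i)) = 0)

/-- Positive part. -/
def pPart (a : ℝ) : ℝ := max a 0

/-- Negative part. -/
def nPart (a : ℝ) : ℝ := max (-a) 0

/-- `V^{(i)}(x,y) = Σ_k [(K^{(ik)}∗ρ^{(k)})(y) - (K^{(ik)}∗ρ^{(k)})(x)]`. -/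
def Vfield {d N : ℕ} (K : Fin N → Fin N → Euc d → Euc d → ℝ) (ρ : Fin N → Measure (Euc d))
    (i : Fin N) (x y : Euc d) : ℝ :=
  ∑ k, (Kconv (K i k) (ρ k) y - Kconv (K i k) (ρ k) x)

/-- The graph velocity `v^{(i)}(x,y) = -V^{(i)}(x,y)`. -/
def graphVel {d N : ℕ} (K : Fin N → Fin N → Euc d → Euc d → ℝ) (ρ : Fin N → Measure (Euc d))
    (i : Fin N) (x y : Euc d) : ℝ :=
  - Vfield K ρ i x y

/-- Weak solutions of the upwind graph system (NL²IE) with edge weight `η^ε`. -/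
def IsGraphWeakSol {d N : ℕ} (T : ℝ) (μt : Euc d → ℝ) (ϑ : Euc d → Euc d → ℝ)
    (K : Fin N → Fin N → Euc d → Euc d → ℝ) (ε : ℝ)
    (ρ : ℝ → Fin N → Measure (Euc d)) : Prop :=
  (∀ t, ∀ i, IsP2 (ρ t i)) ∧
  (∀ i, ∀ f : Euc d →ᵇ ℝ, ContinuousOn (fun t => ∫ x, f x ∂(ρ t i)) (Icc 0 T)) ∧
  (∀ i, ∀ φ : ℝ × Euc d → ℝ, TestFun T φ →
    (∫ t in Icc 0 T, ∫ x, deriv (fun s => φ (s, x)) t ∂(ρ t i)) +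
      (1 / 2) * (∫ t in Icc 0 T,
        ((∫ x, ∫ y, (φ (t, y) - φ (t, x)) * etaEps ϑ ε x y *
            pPart (graphVel K (ρ t) i x y) ∂(baseMeasure μt) ∂(ρ t i)) -
         (∫ y, ∫ x, (φ (t, y) - φ (t, x)) * etaEps ϑ ε x y *
            nPart (graphVel K (ρ t) i x y) ∂(baseMeasure μt) ∂(ρ t i)))) = 0)

/-- Narrow convergence of measures along a filter. -/
def NarrowTendsto {d : ℕ} {ι : Type*} (l : Filter ι) (ρn : ι → Measure (Euc d))
    (ρ : Measure (Euc d)) : Prop :=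
  ∀ f : Euc d →ᵇ ℝ, Tendsto (fun n => ∫ x, f x ∂(ρn n)) l (𝓝 (∫ x, f x ∂ρ))

/-- The upwind first-variation form `l^ε(φ,ψ;ρ)`. -/
def upwindForm {d : ℕ} (μt : Euc d → ℝ) (ϑ : Euc d → Euc d → ℝ) (ε : ℝ)
    (φ ψ : Euc d → ℝ) (ρ : Measure (Euc d)) : ℝ :=
  (1 / 2) *
    ((∫ x, ∫ y, (ψ y - ψ x) * etaEps ϑ ε x y * pPart (φ y - φ x) ∂(baseMeasure μt) ∂ρ) -
     (∫ y, ∫ x, (ψ y - ψ x) * etaEps ϑ ε x y * nPart (φ y - φ x) ∂(baseMeasure μt) ∂ρ))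

/-- The graph metric slope `D_ε(ρ)`. -/
def graphSlope {d N : ℕ} (μt : Euc d → ℝ) (ϑ : Euc d → Euc d → ℝ)
    (K : Fin N → Fin N → Euc d → Euc d → ℝ) (ε : ℝ) (ρ : Fin N → Measure (Euc d)) : ℝ :=
  (1 / 2) * ∑ i,
    ((∫ x, ∫ y, nPart (Vfield K ρ i x y) ^ 2 * etaEps ϑ ε x y ∂(baseMeasure μt) ∂(ρ i)) +
     (∫ y, ∫ x, pPart (Vfield K ρ i x y) ^ 2 * etaEps ϑ ε x y ∂(baseMeasure μt) ∂(ρ i)))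

section Stmt17Aux

variable {d : ℕ}

lemma stmt17_inner_matApply (A : Matrix (Fin d) (Fin d) ℝ) (ξ η : Euc d) :
    ⟪matApply A ξ, η⟫ = dotProduct (A.mulVec (WithLp.equiv 2 (Fin d → ℝ) ξ)) (WithLp.equiv 2 (Fin d → ℝ) η) := by
  simp [matApply, PiLp.inner_apply, dotProduct, mul_comm]

lemma stmt17_inner_matApply_symm (A : Matrix (Fin d) (Fin d) ℝ) (hA : A.IsSymm) (ξ η : Euc d) :
    ⟪matApply A ξ, η⟫ = ⟪ξ, matApply A η⟫ := by
  rw [stmt17_inner_matApply, ← real_inner_comm ξ (matApply A η), stmt17_inner_matApply,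
    dotProduct_comm, Matrix.dotProduct_mulVec, ← Matrix.mulVec_transpose, hA.eq]

lemma stmt17_matApply_matApply (A B : Matrix (Fin d) (Fin d) ℝ) (ξ : Euc d) :
    matApply A (matApply B ξ) = matApply (A * B) ξ := by
  simp [matApply, Matrix.mulVec_mulVec]

lemma stmt17_matApply_one (ξ : Euc d) : matApply 1 ξ = ξ := by
  simp [matApply]

lemma stmt17_matApply_sub (A : Matrix (Fin d) (Fin d) ℝ) (ξ η : Euc d) :
    matApply A (ξ - η) = matApply A ξ - matApply A η := by
  simp only [matApply]
  ext i
  simp [Matrix.mulVec_sub, WithLp.ofLp_sub, WithLp.toLp_sub]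

lemma stmt17_key_alg (A : Matrix (Fin d) (Fin d) ℝ) (hA : A.IsSymm) (hinv : A * A⁻¹ = 1)
    (uu φ : Euc d) :
    ⟪φ, uu⟫ - (1/2 : ℝ) * ⟪matApply A φ, φ⟫
      = (1/2 : ℝ) * ⟪matApply A⁻¹ uu, uu⟫
        - (1/2 : ℝ) * ⟪matApply A (φ - matApply A⁻¹ uu), φ - matApply A⁻¹ uu⟫ := by
  set v := matApply A⁻¹ uu with hv
  have hAv : matApply A v = uu := by rw [hv, stmt17_matApply_matApply, hinv, stmt17_matApply_one]
  have e1 : ⟪matApply A (φ - v), φ - v⟫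
      = ⟪matApply A φ, φ⟫ - ⟪matApply A φ, v⟫ - ⟪matApply A v, φ⟫ + ⟪matApply A v, v⟫ := by
    rw [stmt17_matApply_sub, inner_sub_left, inner_sub_right, inner_sub_right]; ring
  have e2 : ⟪matApply A φ, v⟫ = ⟪φ, uu⟫ := by rw [stmt17_inner_matApply_symm A hA, hAv]
  have e3 : ⟪matApply A v, φ⟫ = ⟪φ, uu⟫ := by rw [hAv, real_inner_comm]
  have e4 : ⟪matApply A v, v⟫ = ⟪v, uu⟫ := by rw [hAv, real_inner_comm]
  rw [e1, e2, e3, e4]; ring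

lemma stmt17_TposDef {c : ℝ} (hc : 0 < c) (A : Matrix (Fin d) (Fin d) ℝ) (hA : A.IsSymm)
    (h : ∀ ξ : Euc d, c * ‖ξ‖ ^ 2 ≤ ⟪ξ, matApply A ξ⟫) : A.PosDef := by
  refine Matrix.PosDef.of_dotProduct_mulVec_pos ?_ ?_
  · rwa [Matrix.IsHermitian, Matrix.conjTranspose_eq_transpose_of_trivial]
  · intro x hx
    set ξ : Euc d := (WithLp.equiv 2 (Fin d → ℝ)).symm x with hξ
    have hξ0 : ξ ≠ 0 := by simpa [hξ] using hx
    have hn : 0 < ‖ξ‖ := norm_pos_iff.mpr hξ0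
    have h1 := h ξ
    have h2 : ⟪ξ, matApply A ξ⟫ = dotProduct (star x) (A.mulVec x) := by
      rw [real_inner_comm, stmt17_inner_matApply]
      simp [hξ, dotProduct, mul_comm]
    rw [h2] at h1
    calc (0:ℝ) < c * ‖ξ‖ ^ 2 := by positivity
    _ ≤ _ := h1

lemma stmt17_cont_matApply {X : Type*} [TopologicalSpace X] {A : X → Matrix (Fin d) (Fin d) ℝ}
    {w : X → Euc d} (hA : Continuous A) (hw : Continuous w) :
    Continuous fun x => matApply (A x) (w x) := by
  unfold matApply
  exact (PiLp.continuous_toLp 2 (fun _ : Fin d => ℝ)).comp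
    (hA.matrix_mulVec ((PiLp.continuous_ofLp 2 (fun _ : Fin d => ℝ)).comp hw))

lemma stmt17_cont_inv {𝕋 : Euc d → Matrix (Fin d) (Fin d) ℝ} (hcont : Continuous 𝕋)
    (hdet : ∀ x, (𝕋 x).det ≠ 0) : Continuous fun x => (𝕋 x)⁻¹ := by
  simp only [Matrix.inv_def, Ring.inverse_eq_inv']
  exact (hcont.matrix_det.inv₀ hdet).smul hcont.matrix_adjugate


end Stmt17Aux

set_option maxHeartbeats 1000000 in
/-- Fenchel–Moreau duality for the weighted action: the
`𝕋⁻¹`-weighted kinetic energy is the supremum of the linear–quadratic functionals over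
compactly supported continuous vector fields. -/
theorem stmt17 {d : ℕ} (𝕋 : Euc d → Matrix (Fin d) (Fin d) ℝ) (c C : ℝ)
    (hc : 0 < c) (hcC : c ≤ C) (hcont : Continuous 𝕋)
    (hsymm : ∀ x, (𝕋 x).IsSymm)
    (hell : ∀ x ξ, c * ‖ξ‖ ^ 2 ≤ ⟪ξ, matApply (𝕋 x) ξ⟫ ∧
      ⟪ξ, matApply (𝕋 x) ξ⟫ ≤ C * ‖ξ‖ ^ 2)
    (ρ : Measure (Euc d)) (hρ : IsProbabilityMeasure ρ)
    (u : Euc d → Euc d) (hu : AEStronglyMeasurable u ρ)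
    (hu2 : Integrable (fun x => ‖u x‖ ^ 2) ρ) :
    IsLUB {r : ℝ | ∃ Φ : Euc d → Euc d, Continuous Φ ∧ HasCompactSupport Φ ∧
        r = (∫ x, ⟪Φ x, u x⟫ ∂ρ) - (1 / 2) * ∫ x, ⟪matApply (𝕋 x) (Φ x), Φ x⟫ ∂ρ}
      ((1 / 2) * ∫ x, ⟪matApply (𝕋 x)⁻¹ (u x), u x⟫ ∂ρ) := by
  haveI := hρ
  have hC : 0 < C := lt_of_lt_of_le hc hcC
  set v : Euc d → Euc d := fun x => matApply (𝕋 x)⁻¹ (u x) with hvdef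
  have hPD : ∀ x, (𝕋 x).PosDef := fun x => stmt17_TposDef hc (𝕋 x) (hsymm x) (fun ξ => (hell x ξ).1)
  have hinv : ∀ x, (𝕋 x) * (𝕋 x)⁻¹ = 1 :=
    fun x => Matrix.mul_nonsing_inv _ ((hPD x).det_pos.ne'.isUnit)
  have hAv : ∀ x, matApply (𝕋 x) (v x) = u x := fun x => by
    rw [hvdef]; simp only
    rw [stmt17_matApply_matApply, hinv x, stmt17_matApply_one]
  have hvb : ∀ x, ‖v x‖ ≤ c⁻¹ * ‖u x‖ := by
    intro x
    have h1 : c * ‖v x‖ ^ 2 ≤ ⟪v x, matApply (𝕋 x) (v x)⟫ := (hell x (v x)).1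
    rw [hAv x] at h1
    have h2 : ⟪v x, u x⟫ ≤ ‖v x‖ * ‖u x‖ := real_inner_le_norm _ _
    have h3 : c * ‖v x‖ ≤ ‖u x‖ := by
      rcases eq_or_lt_of_le (norm_nonneg (v x)) with h0 | h0
      · rw [← h0]; simpa using norm_nonneg (u x)
      · have h4 : (c * ‖v x‖) * ‖v x‖ ≤ ‖u x‖ * ‖v x‖ := by
          have h5 : c * ‖v x‖ ^ 2 ≤ ‖v x‖ * ‖u x‖ := h1.trans h2
          nlinarith [h5]
        exact le_of_mul_le_mul_right h4 h0
    calc ‖v x‖ = c⁻¹ * (c * ‖v x‖) := by field_simp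
    _ ≤ c⁻¹ * ‖u x‖ := mul_le_mul_of_nonneg_left h3 (by positivity)
  have hvm : AEStronglyMeasurable v ρ := by
    have hconti : Continuous fun x => (𝕋 x)⁻¹ :=
      stmt17_cont_inv hcont (fun x => (hPD x).det_pos.ne')
    have hF : Continuous fun p : Euc d × Euc d => matApply (𝕋 p.1)⁻¹ p.2 :=
      stmt17_cont_matApply (hconti.comp continuous_fst) continuous_snd
    have h1 : AEStronglyMeasurable (fun x : Euc d => (x, u x)) ρ :=
      aestronglyMeasurable_id.prodMk hu
    obtain ⟨G, hGc, hGeq⟩ : ∃ G : Euc d × Euc d → Euc d, Continuous G ∧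
        (fun x : Euc d => matApply (𝕋 x)⁻¹ (u x)) = fun x => G (x, u x) := ⟨_, hF, rfl⟩
    rw [hvdef, hGeq]
    exact hGc.comp_aestronglyMeasurable h1
  have hu_mem : MemLp u 2 ρ := (memLp_two_iff_integrable_sq_norm hu).2 hu2
  have hu_int : Integrable u ρ := hu_mem.integrable one_le_two
  have hv_mem : MemLp v 2 ρ := by
    refine (hu_mem.const_smul c⁻¹).of_le hvm (ae_of_all _ fun x => ?_)
    have hn : ‖(c⁻¹ • u) x‖ = c⁻¹ * ‖u x‖ := by
      rw [Pi.smul_apply, norm_smul, Real.norm_eq_abs, abs_of_pos (inv_pos.mpr hc)]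
    rw [hn]
    exact hvb x
  have hf3 : Integrable (fun x => ⟪matApply (𝕋 x)⁻¹ (u x), u x⟫) ρ := by
    refine Integrable.mono' (hu2.const_mul c⁻¹) (hvm.inner hu) (ae_of_all _ fun x => ?_)
    rw [Real.norm_eq_abs]
    calc |⟪v x, u x⟫| ≤ ‖v x‖ * ‖u x‖ := abs_real_inner_le_norm _ _
    _ ≤ (c⁻¹ * ‖u x‖) * ‖u x‖ := mul_le_mul_of_nonneg_right (hvb x) (norm_nonneg _)
    _ = c⁻¹ * ‖u x‖ ^ 2 := by ring
  have main : ∀ Φ : Euc d → Euc d, Continuous Φ → HasCompactSupport Φ →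
      ∃ I : ℝ, 0 ≤ I ∧ I ≤ C * ∫ x, ‖Φ x - v x‖ ^ 2 ∂ρ ∧
        (∫ x, ⟪Φ x, u x⟫ ∂ρ) - (1 / 2) * ∫ x, ⟪matApply (𝕋 x) (Φ x), Φ x⟫ ∂ρ
          = (1 / 2) * (∫ x, ⟪matApply (𝕋 x)⁻¹ (u x), u x⟫ ∂ρ) - (1 / 2) * I := by
    intro Φ hΦc hΦs
    obtain ⟨M, hM⟩ := hΦs.exists_bound_of_continuous hΦc
    have hM0 : 0 ≤ M := le_trans (norm_nonneg (Φ 0)) (hM 0)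
    have hf1 : Integrable (fun x => ⟪Φ x, u x⟫) ρ := by
      refine Integrable.mono' (hu_int.norm.const_mul M)
        (hΦc.aestronglyMeasurable.inner hu) (ae_of_all _ fun x => ?_)
      rw [Real.norm_eq_abs]
      calc |⟪Φ x, u x⟫| ≤ ‖Φ x‖ * ‖u x‖ := abs_real_inner_le_norm _ _
      _ ≤ M * ‖u x‖ := mul_le_mul_of_nonneg_right (hM x) (norm_nonneg _)
    have hcont2 : Continuous fun x => ⟪matApply (𝕋 x) (Φ x), Φ x⟫ :=
      (stmt17_cont_matApply hcont hΦc).inner hΦc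
    have hf2 : Integrable (fun x => ⟪matApply (𝕋 x) (Φ x), Φ x⟫) ρ := by
      refine Integrable.mono' (integrable_const (C * M ^ 2))
        hcont2.aestronglyMeasurable (ae_of_all _ fun x => ?_)
      have h0 : (0:ℝ) ≤ ⟪matApply (𝕋 x) (Φ x), Φ x⟫ := by
        rw [real_inner_comm]
        have := (hell x (Φ x)).1
        nlinarith [norm_nonneg (Φ x), sq_nonneg ‖Φ x‖]
      rw [Real.norm_eq_abs, abs_of_nonneg h0, real_inner_comm]
      calc ⟪Φ x, matApply (𝕋 x) (Φ x)⟫ ≤ C * ‖Φ x‖ ^ 2 := (hell x (Φ x)).2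
      _ ≤ C * M ^ 2 := by
        have hsq : ‖Φ x‖ ^ 2 ≤ M ^ 2 := by nlinarith [hM x, norm_nonneg (Φ x)]
        exact mul_le_mul_of_nonneg_left hsq hC.le
    have hkey : ∀ x, ⟪matApply (𝕋 x) (Φ x - v x), Φ x - v x⟫
        = ⟪matApply (𝕋 x)⁻¹ (u x), u x⟫ + ⟪matApply (𝕋 x) (Φ x), Φ x⟫ - 2 * ⟪Φ x, u x⟫ := by
      intro x
      have := stmt17_key_alg (𝕋 x) (hsymm x) (hinv x) (u x) (Φ x)
      simp only [hvdef] at this ⊢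
      linarith
    have hg_int : Integrable (fun x => ⟪matApply (𝕋 x) (Φ x - v x), Φ x - v x⟫) ρ := by
      refine Integrable.congr ((hf3.add hf2).sub (hf1.const_mul 2)) ?_
      exact ae_of_all _ fun x => ((hkey x).symm)
    refine ⟨∫ x, ⟪matApply (𝕋 x) (Φ x - v x), Φ x - v x⟫ ∂ρ, ?_, ?_, ?_⟩
    · refine integral_nonneg fun x => ?_
      have h1 := (hell x (Φ x - v x)).1
      show (0:ℝ) ≤ ⟪matApply (𝕋 x) (Φ x - v x), Φ x - v x⟫
      rw [real_inner_comm]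
      nlinarith [norm_nonneg (Φ x - v x), sq_nonneg ‖Φ x - v x‖]
    · have hΦmem : MemLp Φ 2 ρ := MemLp.of_bound hΦc.aestronglyMeasurable M (ae_of_all _ hM)
      have hmemsub : MemLp (fun x => Φ x - v x) 2 ρ := hΦmem.sub hv_mem
      have hsq : Integrable (fun x => ‖Φ x - v x‖ ^ 2) ρ :=
        (memLp_two_iff_integrable_sq_norm hmemsub.aestronglyMeasurable).1 hmemsub
      rw [← integral_const_mul]
      refine integral_mono hg_int (hsq.const_mul C) fun x => ?_
      rw [real_inner_comm]
      exact (hell x (Φ x - v x)).2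
    · have e : ∫ x, ⟪matApply (𝕋 x) (Φ x - v x), Φ x - v x⟫ ∂ρ
          = (∫ x, ⟪matApply (𝕋 x)⁻¹ (u x), u x⟫ ∂ρ)
            + (∫ x, ⟪matApply (𝕋 x) (Φ x), Φ x⟫ ∂ρ)
            - 2 * ∫ x, ⟪Φ x, u x⟫ ∂ρ := by
        have h12 : Integrable (fun x => ⟪matApply (𝕋 x)⁻¹ (u x), u x⟫
            + ⟪matApply (𝕋 x) (Φ x), Φ x⟫) ρ := hf3.add hf2
        have h1' : Integrable (fun x => 2 * ⟪Φ x, u x⟫) ρ := hf1.const_mul 2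
        rw [integral_congr_ae (ae_of_all _ hkey), integral_sub h12 h1',
          integral_add hf3 hf2, integral_const_mul]
      rw [e]; ring
  constructor
  · rintro r ⟨Φ, hΦc, hΦs, rfl⟩
    obtain ⟨I, hI0, _, hIe⟩ := main Φ hΦc hΦs
    rw [hIe]
    linarith
  · intro b hb
    refine le_of_forall_pos_le_add fun ε hε => ?_
    have hδ2 : (0:ℝ) < 2 * ε / C := by positivity
    set δ : ℝ := Real.sqrt (2 * ε / C) with hδdef
    have hδ : 0 < δ := Real.sqrt_pos.mpr hδ2
    obtain ⟨Φ, hΦs, hΦnorm, hΦc, hΦmem⟩ :=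
      hv_mem.exists_hasCompactSupport_eLpNorm_sub_le (p := 2) ENNReal.ofNat_ne_top
        (ε := ENNReal.ofReal δ) (by simp [hδ, hδ.le, ENNReal.ofReal_eq_zero, not_le])
    have hmemsub : MemLp (v - Φ) 2 ρ := hv_mem.sub hΦmem
    rw [hmemsub.eLpNorm_eq_integral_rpow_norm two_ne_zero ENNReal.ofNat_ne_top] at hΦnorm
    have htR : ((2:ℝ≥0∞)).toReal = (2:ℝ) := by simp
    set X : ℝ := ∫ x, ‖Φ x - v x‖ ^ 2 ∂ρ with hXdef
    have hX0 : 0 ≤ X := integral_nonneg fun x => by positivity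
    have hXeq : ∫ a, ‖(v - Φ) a‖ ^ ((2:ℝ≥0∞)).toReal ∂ρ = X := by
      rw [hXdef]
      refine integral_congr_ae (ae_of_all _ fun x => ?_)
      show ‖(v - Φ) x‖ ^ ((2:ℝ≥0∞)).toReal = ‖Φ x - v x‖ ^ 2
      rw [htR, show ((2:ℝ)) = ((2:ℕ):ℝ) by norm_num, Real.rpow_natCast, Pi.sub_apply,
        norm_sub_rev]
    rw [hXeq] at hΦnorm
    have hle : X ^ (((2:ℝ≥0∞)).toReal)⁻¹ ≤ δ := by
      rw [← ENNReal.ofReal_le_ofReal_iff hδ.le]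
      exact hΦnorm
    rw [htR] at hle
    have hXδ : X ≤ δ ^ 2 := by
      have h1 : (X ^ ((2:ℝ)⁻¹)) ^ (2:ℕ) ≤ δ ^ (2:ℕ) :=
        pow_le_pow_left₀ (Real.rpow_nonneg hX0 _) hle 2
      rwa [← Real.rpow_natCast (X ^ ((2:ℝ)⁻¹)) 2, ← Real.rpow_mul hX0, (by norm_num : ((2:ℝ)⁻¹) * ((2:ℕ):ℝ) = 1), Real.rpow_one] at h1
    have hδsq : δ ^ 2 = 2 * ε / C := Real.sq_sqrt hδ2.le
    obtain ⟨I, hI0, hIb, hIe⟩ := main Φ hΦc hΦs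
    have hmem : ((∫ x, ⟪Φ x, u x⟫ ∂ρ) - (1 / 2) * ∫ x, ⟪matApply (𝕋 x) (Φ x), Φ x⟫ ∂ρ) ≤ b :=
      hb ⟨Φ, hΦc, hΦs, rfl⟩
    have hIup : I ≤ 2 * ε := by
      calc I ≤ C * X := hIb
      _ ≤ C * (δ ^ 2) := mul_le_mul_of_nonneg_left hXδ hC.le
      _ = 2 * ε := by rw [hδsq]; field_simp
    rw [hIe] at hmem
    linarith


end
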